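/- Let d ≥ 3 and λ ∈ (0, 1/d²) be fixed, let a(ε) = 4(d-1)λ/(1-λε), and let F_ε be the function defined by F_ε(x) = -(d/2)ln x + ((d-2)/2)ln|x + (4d-4)/(d²a(ε)-4d+4)| - d·artanh(√((1-x)/(a(ε)x-x+1))) + (d-2)·artanh(((d-2)/d)√((1-x)/(a(ε)x-x+1))), where F_ε(0) denotes its continuous extension to x = 0. Then the limit as ε → 0⁺ of F_ε(1-λε) - F_ε(0) equals ln( d^{d-2} / ((d-1)^{d-1} λ) ). -/

import Mathlib

/-- The real inverse hyperbolic tangent, `artanh(y) = (1/2)ln((1+y)/(1-y))` on `(-1,1)`. -/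
noncomputable def artanh (y : ℝ) : ℝ := (1 / 2) * Real.log ((1 + y) / (1 - y))

/-- The antiderivative `F_ε(x)` (here `a = a(ε)` is passed as a parameter). -/
noncomputable def Fab (d : ℕ) (a x : ℝ) : ℝ :=
  -((d : ℝ) / 2) * Real.log x
    + (((d : ℝ) - 2) / 2) * Real.log |x + (4 * (d : ℝ) - 4) / ((d : ℝ) ^ 2 * a - 4 * d + 4)|
    - d * artanh (Real.sqrt ((1 - x) / (a * x - x + 1)))
    + ((d : ℝ) - 2) * artanh ((((d : ℝ) - 2) / d) * Real.sqrt ((1 - x) / (a * x - x + 1)))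

/-- The value `F_ε(0)` of the continuous extension of `F_ε` at `x = 0`. -/
noncomputable def Fab0 (d : ℕ) (a : ℝ) : ℝ :=
  (((d : ℝ) - 2) / 2) * Real.log |(4 * (d : ℝ) - 4) / ((d : ℝ) ^ 2 * a - 4 * d + 4)|
    - d * Real.log 2 + ((d : ℝ) / 2) * Real.log a
    + (((d : ℝ) - 2) / 2) * Real.log ((d : ℝ) - 1)

lemma val_lemma (d : ℕ) (hd : 3 ≤ d) (lam : ℝ) (hl0 : 0 < lam)
    (hlt : (d:ℝ)^2 * lam < 1) :
    Fab d (4*((d:ℝ)-1)*lam) 1 - Fab0 d (4*((d:ℝ)-1)*lam)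
      = Real.log ((d:ℝ)^(d-2)/(((d:ℝ)-1)^(d-1)*lam)) := by
  have hd3 : (3:ℝ) ≤ (d:ℝ) := by exact_mod_cast hd
  have ha0 : (0:ℝ) < 4*((d:ℝ)-1)*lam := by nlinarith
  have hD : (d:ℝ)^2*(4*((d:ℝ)-1)*lam) - 4*(d:ℝ) + 4 < 0 := by
    nlinarith [mul_pos (show (0:ℝ) < (d:ℝ)-1 by linarith)
      (show (0:ℝ) < 1 - (d:ℝ)^2*lam by linarith)]
  have hD0 : (d:ℝ)^2*(4*((d:ℝ)-1)*lam) - 4*(d:ℝ) + 4 ≠ 0 := ne_of_lt hD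
  have hs0 : Real.sqrt ((1 - 1) / ((4*((d:ℝ)-1)*lam) * 1 - 1 + 1)) = 0 := by norm_num
  rw [Fab, Fab0, hs0]
  simp only [mul_zero, Real.log_one, mul_one]
  rw [show artanh 0 = 0 by simp [artanh]]
  rw [show (1:ℝ) + (4*(d:ℝ)-4)/((d:ℝ)^2*(4*((d:ℝ)-1)*lam) - 4*(d:ℝ) + 4)
        = ((d:ℝ)^2*(4*((d:ℝ)-1)*lam))/((d:ℝ)^2*(4*((d:ℝ)-1)*lam) - 4*(d:ℝ) + 4) by
      rw [eq_div_iff hD0, add_mul, div_mul_cancel₀ _ hD0]; ring]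
  have hdm1 : (0:ℝ) < (d:ℝ) - 1 := by linarith
  have hd2 : (0:ℝ) < (d:ℝ)^2 := by nlinarith
  rw [Real.log_abs, Real.log_abs,
    Real.log_div (ne_of_gt (by nlinarith : (0:ℝ) < (d:ℝ)^2*(4*((d:ℝ)-1)*lam))) hD0,
    Real.log_div (ne_of_gt (by linarith : (0:ℝ) < 4*(d:ℝ)-4)) hD0,
    show (4*(d:ℝ)-4) = 4*((d:ℝ)-1) by ring,
    Real.log_mul (ne_of_gt hd2) (ne_of_gt ha0),
    Real.log_mul (ne_of_gt (by linarith : (0:ℝ) < 4*((d:ℝ)-1))) (ne_of_gt hl0),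
    Real.log_mul (by norm_num) (ne_of_gt hdm1),
    Real.log_div (ne_of_gt (pow_pos (by linarith : (0:ℝ) < (d:ℝ)) _))
      (ne_of_gt (mul_pos (pow_pos hdm1 _) hl0)),
    Real.log_mul (ne_of_gt (pow_pos hdm1 _)) (ne_of_gt hl0),
    Real.log_pow, Real.log_pow, Real.log_pow,
    show Real.log 4 = 2 * Real.log 2 by
      rw [show (4:ℝ) = 2^2 by norm_num, Real.log_pow]; norm_num]
  have hc2 : ((d-2 : ℕ) : ℝ) = (d:ℝ) - 2 := by
    have : 2 ≤ d := by omega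
    push_cast [this]; ring
  have hc1 : ((d-1 : ℕ) : ℝ) = (d:ℝ) - 1 := by
    have : 1 ≤ d := by omega
    push_cast [this]; ring
  rw [hc2, hc1]
  push_cast
  ring
/-- `lim_{ε→0⁺} (F_ε(1-λε) - F_ε(0)) = ln(d^{d-2}/((d-1)^{d-1}λ))`. -/
theorem stmt17 (d : ℕ) (hd : 3 ≤ d) (lam : ℝ)
    (hlam : lam ∈ Set.Ioo (0:ℝ) (1 / (d : ℝ) ^ 2)) :
    Filter.Tendsto (fun ε : ℝ =>
        Fab d (4 * ((d : ℝ) - 1) * lam / (1 - lam * ε)) (1 - lam * ε)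
          - Fab0 d (4 * ((d : ℝ) - 1) * lam / (1 - lam * ε)))
      (nhdsWithin 0 (Set.Ioi (0:ℝ)))
      (nhds (Real.log ((d : ℝ) ^ (d - 2) / (((d : ℝ) - 1) ^ (d - 1) * lam)))) := by
  obtain ⟨hl0, hl2⟩ := hlam
  have hd3 : (3:ℝ) ≤ (d:ℝ) := by exact_mod_cast hd
  have hd2 : (0:ℝ) < (d:ℝ)^2 := by nlinarith
  have hlt : (d:ℝ)^2 * lam < 1 := by
    rw [lt_div_iff₀ hd2] at hl2
    nlinarith [hl2]
  have ha0 : (0:ℝ) < 4*((d:ℝ)-1)*lam := by nlinarith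
  have hD : (d:ℝ)^2*(4*((d:ℝ)-1)*lam) - 4*(d:ℝ) + 4 < 0 := by
    nlinarith [mul_pos (show (0:ℝ) < (d:ℝ)-1 by linarith)
      (show (0:ℝ) < 1 - (d:ℝ)^2*lam by linarith)]
  have hX0 : (1:ℝ) - lam * 0 = 1 := by ring
  have hA0 : 4*((d:ℝ)-1)*lam/(1-lam*0) = 4*((d:ℝ)-1)*lam := by norm_num
  -- continuity pieces
  have hXc : ContinuousAt (fun ε : ℝ => 1 - lam * ε) 0 := by fun_prop
  have hAc : ContinuousAt (fun ε : ℝ => 4*((d:ℝ)-1)*lam/(1-lam*ε)) 0 :=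
    ContinuousAt.div (by fun_prop) hXc (by norm_num)
  have hden : ContinuousAt
      (fun ε : ℝ => (d:ℝ)^2 * (4*((d:ℝ)-1)*lam/(1-lam*ε)) - 4*(d:ℝ) + 4) 0 :=
    ((continuousAt_const.mul hAc).sub continuousAt_const).add continuousAt_const
  have hden0 : (d:ℝ)^2 * (4*((d:ℝ)-1)*lam/(1-lam*0)) - 4*(d:ℝ) + 4 ≠ 0 := by
    rw [hA0]; exact ne_of_lt hD
  have hsden0 : 4*((d:ℝ)-1)*lam/(1-lam*0) * (1-lam*0) - (1-lam*0) + 1 ≠ 0 := by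
    rw [hA0, hX0]
    rw [show 4*((d:ℝ)-1)*lam * 1 - 1 + 1 = 4*((d:ℝ)-1)*lam by ring]
    exact ne_of_gt ha0
  have hs : ContinuousAt (fun ε : ℝ => Real.sqrt ((1 - (1-lam*ε)) /
      (4*((d:ℝ)-1)*lam/(1-lam*ε) * (1-lam*ε) - (1-lam*ε) + 1))) 0 :=
    (ContinuousAt.div (continuousAt_const.sub hXc)
      (((hAc.mul hXc).sub hXc).add continuousAt_const) hsden0).sqrt
  have hs0 : Real.sqrt ((1 - (1-lam*0)) /
      (4*((d:ℝ)-1)*lam/(1-lam*0) * (1-lam*0) - (1-lam*0) + 1)) = 0 := by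
    norm_num
  have hart : ContinuousAt artanh 0 := by
    unfold artanh
    exact continuousAt_const.mul
      (((continuousAt_const.add continuousAt_id).div
        (continuousAt_const.sub continuousAt_id) (by norm_num)).log (by norm_num))
  have hat1 : ContinuousAt (fun ε : ℝ => artanh (Real.sqrt ((1 - (1-lam*ε)) /
      (4*((d:ℝ)-1)*lam/(1-lam*ε) * (1-lam*ε) - (1-lam*ε) + 1)))) 0 := by
    have h1 : ContinuousAt artanh (Real.sqrt ((1 - (1-lam*0)) /
        (4*((d:ℝ)-1)*lam/(1-lam*0) * (1-lam*0) - (1-lam*0) + 1))) := by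
      rw [hs0]; exact hart
    exact ContinuousAt.comp (g := artanh)
      (f := fun ε : ℝ => Real.sqrt ((1 - (1-lam*ε)) /
        (4*((d:ℝ)-1)*lam/(1-lam*ε) * (1-lam*ε) - (1-lam*ε) + 1))) h1 hs
  have hat2 : ContinuousAt (fun ε : ℝ => artanh (((d:ℝ)-2)/(d:ℝ) * Real.sqrt ((1 - (1-lam*ε)) /
      (4*((d:ℝ)-1)*lam/(1-lam*ε) * (1-lam*ε) - (1-lam*ε) + 1)))) 0 := by
    have h1 : ContinuousAt artanh (((d:ℝ)-2)/(d:ℝ) * Real.sqrt ((1 - (1-lam*0)) /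
        (4*((d:ℝ)-1)*lam/(1-lam*0) * (1-lam*0) - (1-lam*0) + 1))) := by
      rw [hs0, mul_zero]; exact hart
    exact ContinuousAt.comp (g := artanh)
      (f := fun ε : ℝ => ((d:ℝ)-2)/(d:ℝ) * Real.sqrt ((1 - (1-lam*ε)) /
        (4*((d:ℝ)-1)*lam/(1-lam*ε) * (1-lam*ε) - (1-lam*ε) + 1))) h1
      (continuousAt_const.mul hs)
  have hDne : ((d:ℝ)^2*(4*((d:ℝ)-1)*lam) - 4*(d:ℝ) + 4) ≠ 0 := ne_of_lt hD
  have hGne : (1:ℝ) - lam*0 + (4*(d:ℝ)-4) /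
      ((d:ℝ)^2*(4*((d:ℝ)-1)*lam/(1-lam*0)) - 4*(d:ℝ) + 4) ≠ 0 := by
    rw [hA0, hX0]
    rw [show (1:ℝ) + (4*(d:ℝ)-4)/((d:ℝ)^2*(4*((d:ℝ)-1)*lam) - 4*(d:ℝ) + 4)
        = ((d:ℝ)^2*(4*((d:ℝ)-1)*lam))/((d:ℝ)^2*(4*((d:ℝ)-1)*lam) - 4*(d:ℝ) + 4) by
      rw [eq_div_iff hDne, add_mul, div_mul_cancel₀ _ hDne]; ring]
    exact div_ne_zero (ne_of_gt (by nlinarith)) (ne_of_lt hD)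
  have hc : ContinuousAt (fun ε : ℝ =>
      Fab d (4*((d:ℝ)-1)*lam/(1-lam*ε)) (1-lam*ε)
        - Fab0 d (4*((d:ℝ)-1)*lam/(1-lam*ε))) 0 := by
    unfold Fab
    unfold Fab0
    refine ContinuousAt.sub (ContinuousAt.add (ContinuousAt.sub (ContinuousAt.add ?_ ?_) ?_) ?_)
      (ContinuousAt.add (ContinuousAt.add (ContinuousAt.sub ?_ ?_) ?_) ?_)
    · exact continuousAt_const.mul (hXc.log (by norm_num))
    · exact continuousAt_const.mul
        ((hXc.add (ContinuousAt.div continuousAt_const hden hden0)).abs.log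
          (abs_ne_zero.mpr hGne))
    · exact continuousAt_const.mul hat1
    · exact continuousAt_const.mul hat2
    · exact continuousAt_const.mul
        ((ContinuousAt.div continuousAt_const hden hden0).abs.log
          (abs_ne_zero.mpr (div_ne_zero (by norm_num; nlinarith) hden0)))
    · exact continuousAt_const
    · refine continuousAt_const.mul (hAc.log ?_)
      rw [hA0]; exact ne_of_gt ha0
    · exact continuousAt_const
  have key := hc.tendsto.mono_left (nhdsWithin_le_nhds (s := Set.Ioi (0:ℝ)))
  have hval : Fab d (4*((d:ℝ)-1)*lam/(1-lam*0)) (1-lam*0)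
      - Fab0 d (4*((d:ℝ)-1)*lam/(1-lam*0))
      = Real.log ((d:ℝ)^(d-2)/(((d:ℝ)-1)^(d-1)*lam)) := by
    rw [hA0, hX0]
    exact val_lemma d hd lam hl0 hlt
  rw [← hval]
  exact key
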